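/- arXiv:2104.09618 — 3 statements merged into one kernel-verified Lean document; each statement's English description precedes it below -/
import Mathlib

section
/- Let H be a symmetric positive semi-definite d×d real matrix whose largest eigenvalue λ₁ > 0 is simple, and let q ∈ ℝ^d be a unit eigenvector with Hq = λ₁q. Let v : [0,∞) → ℝ^d be differentiable with ‖v(t)‖ = 1 for all t ≥ 0 and satisfy the Oja PCA flow v̇(t) = (I − v(t)v(t)ᵀ)Hv(t). If −1 ≤ ⟨q, v(0)⟩ < 0, then v(t) → −q as t → ∞. -/
/-!
Put `a(t) = ⟪q, v t⟫`. Along the flow `a' = (λ₁ - ⟪H v, v⟫) a`, and the spectral gap below the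
simple top eigenvalue gives `λ₁ - ⟪H v, v⟫ ≥ g (1 - a²)` with `g > 0` for unit `v`. Hence `a²` is
nondecreasing, so `a` never vanishes and stays below `a(0) < 0`; then `(1 + a)' ≤ g a(0) (1 + a)`,
so `1 + a` decays exponentially by Grönwall, and `‖v + q‖² = 2 (1 + a) → 0`.
-/

open Matrix Filter
open scoped InnerProductSpace

/-- Right-hand side of the Oja PCA flow `v̇ = (I - v vᵀ) M v` on `ℝ^d`. -/
noncomputable def ojaRHS {d : ℕ} (M : Matrix (Fin d) (Fin d) ℝ)
    (x : EuclideanSpace ℝ (Fin d)) : EuclideanSpace ℝ (Fin d) :=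
  WithLp.toLp 2 (((1 - Matrix.vecMulVec x x) * M) *ᵥ x)

open Real Set Topology

namespace LinearMap.IsSymmetric

variable {E : Type*} [NormedAddCommGroup E] [InnerProductSpace ℝ E] [FiniteDimensional ℝ E]
  {T : E →ₗ[ℝ] E}

lemma inner_map_self_eq_sum (hT : T.IsSymmetric) {n : ℕ}
    (hn : Module.finrank ℝ E = n) (x : E) :
    ⟪T x, x⟫_ℝ = ∑ i, hT.eigenvalues hn i * ⟪hT.eigenvectorBasis hn i, x⟫_ℝ ^ 2 := by
  rw [← (hT.eigenvectorBasis hn).sum_inner_mul_inner]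
  refine Finset.sum_congr rfl fun i _ => ?_
  rw [real_inner_comm, ← hT, apply_eigenvectorBasis, real_inner_smul_left]
  simp only [RCLike.ofReal_real_eq_id, id_eq]
  ring

lemma exists_spectral_gap_of_inner_eq_zero (hT : T.IsSymmetric)
    {lam : ℝ} {q : E} (hmax : ∀ (μ : ℝ) (w : E), w ≠ 0 → T w = μ • w → μ ≤ lam)
    (hsimple : ∀ w : E, T w = lam • w → ∃ c : ℝ, w = c • q) :
    ∃ g > 0, ∀ w : E, ⟪q, w⟫_ℝ = 0 → g * ‖w‖ ^ 2 ≤ lam * ‖w‖ ^ 2 - ⟪T w, w⟫_ℝ := by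
  set b := hT.eigenvectorBasis rfl
  set μ := hT.eigenvalues rfl
  have hb (i) : T (b i) = μ i • b i := by simp [b, μ]
  have hsmall : ∀ᶠ g in 𝓝[>] (0 : ℝ), ∀ i, μ i < lam → g ≤ lam - μ i := by
    refine eventually_all.2 fun i => ?_
    by_cases hi : μ i < lam
    · filter_upwards [nhdsWithin_le_nhds (eventually_le_nhds (sub_pos.2 hi))] with g hg _
      exact hg
    · exact .of_forall fun _ h => absurd h hi
  obtain ⟨g, hg, hg_pos⟩ := (hsmall.and self_mem_nhdsWithin).exists
  refine ⟨g, hg_pos, fun w hw => ?_⟩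
  have hterm (i) : g * ⟪b i, w⟫_ℝ ^ 2 ≤ (lam - μ i) * ⟪b i, w⟫_ℝ ^ 2 := by
    rcases (hmax _ _ (b.orthonormal.ne_zero i) (hb i)).lt_or_eq with hi | hi
    · exact mul_le_mul_of_nonneg_right (hg i hi) (sq_nonneg _)
    · obtain ⟨c, hc⟩ := hsimple (b i) (hi ▸ hb i)
      rw [hc, real_inner_smul_left, hw]
      simp
  calc g * ‖w‖ ^ 2 = ∑ i, g * ⟪b i, w⟫_ℝ ^ 2 := by rw [← b.sum_sq_inner_right, Finset.mul_sum]
    _ ≤ ∑ i, (lam - μ i) * ⟪b i, w⟫_ℝ ^ 2 := Finset.sum_le_sum fun i _ => hterm i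
    _ = lam * ‖w‖ ^ 2 - ⟪T w, w⟫_ℝ := by
      simp only [sub_mul, Finset.sum_sub_distrib, ← Finset.mul_sum, b.sum_sq_inner_right,
        hT.inner_map_self_eq_sum rfl, μ, b]

lemma exists_spectral_gap (hT : T.IsSymmetric) {lam : ℝ} {q : E}
    (hq : ‖q‖ = 1) (hTq : T q = lam • q)
    (hmax : ∀ (μ : ℝ) (w : E), w ≠ 0 → T w = μ • w → μ ≤ lam)
    (hsimple : ∀ w : E, T w = lam • w → ∃ c : ℝ, w = c • q) :
    ∃ g > 0, ∀ x : E, g * (‖x‖ ^ 2 - ⟪q, x⟫_ℝ ^ 2) ≤ lam * ‖x‖ ^ 2 - ⟪T x, x⟫_ℝ := by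
  obtain ⟨g, hg, hgap⟩ := hT.exists_spectral_gap_of_inner_eq_zero hmax hsimple
  refine ⟨g, hg, fun x => ?_⟩
  set a := ⟪q, x⟫_ℝ
  set w := x - a • q
  have hqq : ⟪q, q⟫_ℝ = 1 := by rw [real_inner_self_eq_norm_sq, hq, one_pow]
  have hqw : ⟪q, w⟫_ℝ = 0 := by
    rw [inner_sub_right, real_inner_smul_right, hqq, mul_one, sub_self]
  have hx : x = a • q + w := (add_sub_cancel _ _).symm
  have hnorm : ‖x‖ ^ 2 = a ^ 2 + ‖w‖ ^ 2 := by
    rw [hx, ← real_inner_self_eq_norm_sq, ← real_inner_self_eq_norm_sq]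
    simp only [inner_add_left, inner_add_right, real_inner_smul_left, real_inner_smul_right,
      hqq, hqw, real_inner_comm q w]
    ring
  have hquad : ⟪T x, x⟫_ℝ = lam * a ^ 2 + ⟪T w, w⟫_ℝ := by
    rw [hx, map_add, map_smul, hTq]
    simp only [inner_add_left, inner_add_right, real_inner_smul_left, real_inner_smul_right,
      hqq, hqw, real_inner_comm q w, hT w q, hTq]
    ring
  have := hgap w hqw
  rw [hnorm, hquad]
  linarith

end LinearMap.IsSymmetric

lemma ojaRHS_eq_sub_smul {d : ℕ} (M : Matrix (Fin d) (Fin d) ℝ)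
    (x : EuclideanSpace ℝ (Fin d)) :
    ojaRHS M x = toEuclideanLin M x - ⟪toEuclideanLin M x, x⟫_ℝ • x := by
  ext i
  simp [ojaRHS, Matrix.sub_mul, Matrix.sub_mulVec, ← Matrix.mulVec_mulVec, vecMulVec_mulVec,
    EuclideanSpace.inner_eq_star_dotProduct]

lemma inner_ojaRHS_of_isHermitian {d : ℕ} {M : Matrix (Fin d) (Fin d) ℝ} (hM : M.IsHermitian)
    {lam : ℝ} {q : EuclideanSpace ℝ (Fin d)} (hMq : toEuclideanLin M q = lam • q)
    (x : EuclideanSpace ℝ (Fin d)) :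
    ⟪q, ojaRHS M x⟫_ℝ = (lam - ⟪toEuclideanLin M x, x⟫_ℝ) * ⟪q, x⟫_ℝ := by
  rw [ojaRHS_eq_sub_smul, inner_sub_right, real_inner_smul_right,
    ← isSymmetric_toEuclideanLin_iff.2 hM, hMq, real_inner_smul_left]
  ring

lemma le_mul_exp_of_hasDerivAt_le {u u' : ℝ → ℝ} {K : ℝ}
    (hu : ∀ t, 0 ≤ t → HasDerivAt u (u' t) t) (hle : ∀ t, 0 ≤ t → u' t ≤ K * u t)
    {t : ℝ} (ht : 0 ≤ t) : u t ≤ u 0 * exp (K * t) := by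
  have := le_gronwallBound_of_liminf_deriv_right_le (ε := 0)
    (fun s hs => (hu s hs.1).continuousAt.continuousWithinAt)
    (fun s hs _ hr => (hu s hs.1).hasDerivWithinAt.liminf_right_slope_le hr) le_rfl
    (fun s hs => by simpa using hle s hs.1) t ⟨ht, le_rfl⟩
  simpa [gronwallBound_ε0] using this

lemma monotoneOn_sq_of_hasDerivAt_mul {a k : ℝ → ℝ}
    (ha : ∀ t, 0 ≤ t → HasDerivAt a (k t * a t) t) (hk : ∀ t, 0 ≤ t → 0 ≤ k t) :
    MonotoneOn (fun t => a t ^ 2) (Ici 0) := by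
  have hsq (t) (ht : 0 ≤ t) : HasDerivAt (fun t => a t ^ 2) (2 * k t * a t ^ 2) t := by
    refine ((ha t ht).fun_pow 2).congr_deriv ?_
    push_cast
    ring
  refine monotoneOn_of_hasDerivWithinAt_nonneg (convex_Ici 0)
    (fun t ht => (hsq t ht).continuousAt.continuousWithinAt)
    (fun t ht => (hsq t (interior_subset ht)).hasDerivWithinAt) fun t ht => ?_
  have := hk t (interior_subset ht)
  positivity

theorem tendsto_neg_one_of_hasDerivAt_mul {a k : ℝ → ℝ} {g : ℝ} (hg : 0 < g)
    (ha : ∀ t, 0 ≤ t → HasDerivAt a (k t * a t) t)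
    (hk : ∀ t, 0 ≤ t → g * (1 - a t ^ 2) ≤ k t) (ha_sq : ∀ t, 0 ≤ t → a t ^ 2 ≤ 1)
    (ha0 : a 0 < 0) : Tendsto a atTop (𝓝 (-1)) := by
  have hk_nonneg (t) (ht : 0 ≤ t) : 0 ≤ k t :=
    (mul_nonneg hg.le (sub_nonneg.2 (ha_sq t ht))).trans (hk t ht)
  have hsq_mono := monotoneOn_sq_of_hasDerivAt_mul ha hk_nonneg
  have hsq_ge (t) (ht : 0 ≤ t) : a 0 ^ 2 ≤ a t ^ 2 := hsq_mono self_mem_Ici ht ht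
  have hneg (t) (ht : 0 ≤ t) : a t < 0 := by
    by_contra! hpos
    obtain ⟨s, hs, has⟩ := intermediate_value_Icc ht
      (fun s hs => (ha s hs.1).continuousAt.continuousWithinAt) ⟨ha0.le, hpos⟩
    nlinarith [hsq_ge s hs.1]
  have hle (t) (ht : 0 ≤ t) : a t ≤ a 0 := by nlinarith [hsq_ge t ht, hneg t ht]
  -- `1 + a` decays exponentially: `(1 + a)' = k a ≤ g (1 - a) (1 + a) a ≤ g a₀ (1 + a)`
  have hdecay (t) (ht : 0 ≤ t) : 1 + a t ≤ (1 + a 0) * exp (g * a 0 * t) := by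
    refine le_mul_exp_of_hasDerivAt_le (u := fun t => 1 + a t)
      (fun t ht => (ha t ht).const_add 1) (fun t ht => ?_) ht
    have h1 : k t * a t ≤ g * (1 - a t ^ 2) * a t :=
      mul_le_mul_of_nonpos_right (hk t ht) (hneg t ht).le
    have h2 : 0 ≤ 1 + a t := by nlinarith [ha_sq t ht]
    have h3 : a t - a t ^ 2 ≤ a 0 := by nlinarith [hle t ht]
    nlinarith [mul_le_mul_of_nonneg_left h3 (mul_nonneg hg.le h2)]
  have hexp : Tendsto (fun t => (1 + a 0) * exp (g * a 0 * t)) atTop (𝓝 0) := by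
    simpa using (tendsto_exp_atBot.comp
      (tendsto_id.const_mul_atTop_of_neg (mul_neg_of_pos_of_neg hg ha0))).const_mul (1 + a 0)
  have hlim : Tendsto (fun t => 1 + a t) atTop (𝓝 0) :=
    tendsto_of_tendsto_of_tendsto_of_le_of_le' tendsto_const_nhds hexp
      (eventually_ge_atTop 0 |>.mono fun t ht => by nlinarith [ha_sq t ht])
      (eventually_ge_atTop 0 |>.mono hdecay)
  simpa using hlim.const_add (-1)

lemma tendsto_neg_of_inner_tendsto_neg_one {E α : Type*} [NormedAddCommGroup E]
    [InnerProductSpace ℝ E] {l : Filter α} {v : α → E} {q : E} (hq : ‖q‖ = 1)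
    (hv : ∀ᶠ t in l, ‖v t‖ = 1) (h : Tendsto (fun t => ⟪q, v t⟫_ℝ) l (𝓝 (-1))) :
    Tendsto v l (𝓝 (-q)) := by
  have hsqrt : Tendsto (fun t => √(2 * (1 + ⟪q, v t⟫_ℝ))) l (𝓝 0) := by
    simpa using ((h.const_add 1).const_mul 2).sqrt
  refine tendsto_iff_norm_sub_tendsto_zero.2 (hsqrt.congr' (hv.mono fun t ht => ?_))
  dsimp only
  rw [sub_neg_eq_add, ← sqrt_sq (norm_nonneg _), norm_add_sq_real, ht, hq, real_inner_comm]
  ring_nf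

lemma toEuclideanLin_eq_smul_iff {d : ℕ} (M : Matrix (Fin d) (Fin d) ℝ) (μ : ℝ)
    (w : EuclideanSpace ℝ (Fin d)) :
    toEuclideanLin M w = μ • w ↔ M *ᵥ w = μ • w :=
  (WithLp.ofLp_injective 2).eq_iff.symm

theorem stmt1_general {d : ℕ} (H : Matrix (Fin d) (Fin d) ℝ) (hH : H.PosSemidef)
    (lam1 : ℝ)
    (q : EuclideanSpace ℝ (Fin d)) (hq : ‖q‖ = 1)
    (heig : H *ᵥ q = lam1 • q)
    (hmax : ∀ (μ : ℝ) (w : EuclideanSpace ℝ (Fin d)), w ≠ 0 → H *ᵥ w = μ • w → μ ≤ lam1)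
    (hsimple : ∀ w : EuclideanSpace ℝ (Fin d), H *ᵥ w = lam1 • w → ∃ c : ℝ, w = c • q)
    (v : ℝ → EuclideanSpace ℝ (Fin d))
    (hnorm : ∀ t : ℝ, 0 ≤ t → ‖v t‖ = 1)
    (hode : ∀ t : ℝ, 0 ≤ t → HasDerivAt v (ojaRHS H (v t)) t)
    (h0neg : ⟪q, v 0⟫_ℝ < 0) :
    Tendsto v atTop (nhds (-q)) := by
  set T := toEuclideanLin H
  have hT : T.IsSymmetric := isSymmetric_toEuclideanLin_iff.2 hH.isHermitian
  have hTq : T q = lam1 • q := (toEuclideanLin_eq_smul_iff H lam1 q).2 heig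
  obtain ⟨g, hg, hgap⟩ := hT.exists_spectral_gap hq hTq
    (fun μ w hw h => hmax μ w hw ((toEuclideanLin_eq_smul_iff H μ w).1 h))
    (fun w h => hsimple w ((toEuclideanLin_eq_smul_iff H lam1 w).1 h))
  have hderiv (t) (ht : 0 ≤ t) :
      HasDerivAt (fun t => ⟪q, v t⟫_ℝ) ((lam1 - ⟪T (v t), v t⟫_ℝ) * ⟪q, v t⟫_ℝ) t := by
    simpa [inner_ojaRHS_of_isHermitian hH.isHermitian hTq] using
      (hasDerivAt_const t q).inner ℝ (hode t ht)
  have hrate (t) (ht : 0 ≤ t) : g * (1 - ⟪q, v t⟫_ℝ ^ 2) ≤ lam1 - ⟪T (v t), v t⟫_ℝ := by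
    simpa [hnorm t ht] using hgap (v t)
  have hsq (t) (ht : 0 ≤ t) : ⟪q, v t⟫_ℝ ^ 2 ≤ 1 := by
    simpa [hq, hnorm t ht] using abs_real_inner_le_norm q (v t)
  exact tendsto_neg_of_inner_tendsto_neg_one hq (eventually_ge_atTop 0 |>.mono hnorm)
    (tendsto_neg_one_of_hasDerivAt_mul hg hderiv hrate hsq h0neg)

/-- If `H` is symmetric positive semi-definite with simple largest eigenvalue
`λ₁ > 0` and unit eigenvector `q`, any unit-norm solution of the Oja PCA flow
with `-1 ≤ ⟨q, v(0)⟩ < 0` converges to `-q`. -/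
theorem stmt1 {d : ℕ} (H : Matrix (Fin d) (Fin d) ℝ) (hH : H.PosSemidef)
    (lam1 : ℝ) (hlam1 : 0 < lam1)
    (q : EuclideanSpace ℝ (Fin d)) (hq : ‖q‖ = 1)
    (heig : H *ᵥ q = lam1 • q)
    (hmax : ∀ (μ : ℝ) (w : EuclideanSpace ℝ (Fin d)), w ≠ 0 → H *ᵥ w = μ • w → μ ≤ lam1)
    (hsimple : ∀ w : EuclideanSpace ℝ (Fin d), H *ᵥ w = lam1 • w → ∃ c : ℝ, w = c • q)
    (v : ℝ → EuclideanSpace ℝ (Fin d))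
    (hnorm : ∀ t : ℝ, 0 ≤ t → ‖v t‖ = 1)
    (hode : ∀ t : ℝ, 0 ≤ t → HasDerivAt v (ojaRHS H (v t)) t)
    (h0ge : -1 ≤ ⟪q, v 0⟫_ℝ) (h0neg : ⟪q, v 0⟫_ℝ < 0) :
    Tendsto v atTop (nhds (-q)) :=
  stmt1_general H hH lam1 q hq heig hmax hsimple v hnorm hode h0neg
end

section
/- Let q ∈ ℝ^d be a unit vector and set H = qqᵀ. Let the index set {1,…,N} be partitioned into two sets 𝒱₁ and 𝒱₂, and for each i let vᵢ : [0,∞) → ℝ^d be differentiable with ‖vᵢ(t)‖ = 1 for all t and satisfy v̇ᵢ(t) = (I − vᵢ(t)vᵢ(t)ᵀ)Hvᵢ(t). If 0 < ⟨q, vᵢ(0)⟩ ≤ 1 for every i ∈ 𝒱₁ and −1 ≤ ⟨q, vⱼ(0)⟩ < 0 for every j ∈ 𝒱₂, then vᵢ(t) → q for every i ∈ 𝒱₁ and vⱼ(t) → −q for every j ∈ 𝒱₂ as t → ∞; in particular the opinions converge to the dissensus configuration {q, −q}. -/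
/-! The coordinate `a = ⟪q, v⟫` solves `ȧ = a - a³`, so `b = 1 - a²` solves `ḃ = -2a²b ≤ 0`.
Hence `a² ≥ a(0)² > 0`, so `a` keeps the sign of `a(0)`, and Grönwall's inequality gives
`b(t) ≤ b(0) e^{-2a(0)²t}`. Thus `⟪q, v⟫ → 1`, which for unit vectors means `v → q`. Agents of `𝒱₂`
are handled by replacing `q` with `-q`, which leaves `H = qqᵀ` unchanged. -/

open Matrix Filter
open scoped InnerProductSpace

open Set Topology

section SubCube

variable {a : ℝ → ℝ}

lemma hasDerivAt_one_sub_sq_of_sub_cube {t : ℝ} (ha : HasDerivAt a (a t - a t ^ 3) t) :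
    HasDerivAt (fun s => 1 - a s ^ 2) (-(2 * a t ^ 2) * (1 - a t ^ 2)) t := by
  refine ((ha.fun_pow 2).const_sub 1).congr_deriv ?_
  push_cast
  ring

lemma sq_zero_le_sq_of_sub_cube (ha : ∀ t, 0 ≤ t → HasDerivAt a (a t - a t ^ 3) t)
    (hle : ∀ t, 0 ≤ t → a t ^ 2 ≤ 1) {t : ℝ} (ht : 0 ≤ t) : a 0 ^ 2 ≤ a t ^ 2 := by
  have hanti : AntitoneOn (fun s => 1 - a s ^ 2) (Ici 0) := by
    refine antitoneOn_of_hasDerivWithinAt_nonpos (convex_Ici 0)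
      (continuousOn_const.sub ((HasDerivAt.continuousOn ha).pow 2))
      (fun s hs => (hasDerivAt_one_sub_sq_of_sub_cube (ha s (interior_subset hs))).hasDerivWithinAt)
      fun s hs => ?_
    have := hle s (interior_subset hs)
    nlinarith [sq_nonneg (a s)]
  have := hanti self_mem_Ici ht ht
  simp only at this
  linarith

lemma one_sub_sq_le_exp_of_sub_cube (ha : ∀ t, 0 ≤ t → HasDerivAt a (a t - a t ^ 3) t)
    (hle : ∀ t, 0 ≤ t → a t ^ 2 ≤ 1) {t : ℝ} (ht : 0 ≤ t) :
    1 - a t ^ 2 ≤ (1 - a 0 ^ 2) * Real.exp (-(2 * a 0 ^ 2) * t) := by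
  have h := le_gronwallBound_of_liminf_deriv_right_le (f := fun s => 1 - a s ^ 2)
    (δ := 1 - a 0 ^ 2) (K := -(2 * a 0 ^ 2)) (ε := 0) (a := 0) (b := t)
    ((continuousOn_const.sub ((HasDerivAt.continuousOn ha).pow 2)).mono Icc_subset_Ici_self)
    (fun s hs _ hr =>
      (hasDerivAt_one_sub_sq_of_sub_cube (ha s hs.1)).hasDerivWithinAt.liminf_right_slope_le hr)
    le_rfl (fun s hs => ?_) t ⟨ht, le_rfl⟩
  · simpa [gronwallBound_ε0] using h
  · have h1 := hle s hs.1
    have h2 := sq_zero_le_sq_of_sub_cube ha hle hs.1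
    nlinarith

lemma pos_of_sub_cube (ha : ∀ t, 0 ≤ t → HasDerivAt a (a t - a t ^ 3) t)
    (hle : ∀ t, 0 ≤ t → a t ^ 2 ≤ 1) (h0 : 0 < a 0) {t : ℝ} (ht : 0 ≤ t) : 0 < a t := by
  by_contra! hneg
  obtain ⟨s, hs, has⟩ := intermediate_value_Icc' ht
    ((HasDerivAt.continuousOn ha).mono Icc_subset_Ici_self) ⟨hneg, h0.le⟩
  have := sq_zero_le_sq_of_sub_cube ha hle hs.1
  rw [has] at this
  nlinarith

theorem tendsto_one_of_sub_cube (ha : ∀ t, 0 ≤ t → HasDerivAt a (a t - a t ^ 3) t)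
    (hle : ∀ t, 0 ≤ t → a t ^ 2 ≤ 1) (h0 : 0 < a 0) : Tendsto a atTop (𝓝 1) := by
  have hexp : Tendsto (fun t => (1 - a 0 ^ 2) * Real.exp (-(2 * a 0 ^ 2) * t)) atTop (𝓝 0) := by
    simpa using (Real.tendsto_exp_atBot.comp
      (tendsto_id.const_mul_atTop_of_neg (by nlinarith : -(2 * a 0 ^ 2) < 0))).const_mul
      (1 - a 0 ^ 2)
  suffices Tendsto (fun t => 1 - a t) atTop (𝓝 0) by
    simpa using this.const_sub 1
  refine squeeze_zero' ?_ ?_ hexp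
  all_goals filter_upwards [eventually_ge_atTop 0] with t ht
  · nlinarith [hle t ht, pos_of_sub_cube ha hle h0 ht]
  · have h1 := hle t ht
    have h2 := pos_of_sub_cube ha hle h0 ht
    nlinarith [one_sub_sq_le_exp_of_sub_cube ha hle ht]

end SubCube

lemma ojaRHS_vecMulVec_self {d : ℕ} (q x : EuclideanSpace ℝ (Fin d)) :
    ojaRHS (vecMulVec q q) x = ⟪q, x⟫_ℝ • q - ⟪q, x⟫_ℝ ^ 2 • x := by
  ext i
  simp only [ojaRHS, sub_mul, one_mul, vecMulVec_mul_vecMulVec, dotProduct_comm, vecMulVec_smul,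
    sub_mulVec, vecMulVec_mulVec, op_smul_eq_smul, smul_mulVec, WithLp.toLp_sub, WithLp.toLp_smul,
    WithLp.toLp_ofLp, PiLp.sub_apply, PiLp.smul_apply, smul_eq_mul,
    EuclideanSpace.inner_eq_star_dotProduct, star_trivial, sub_right_inj]
  ring

lemma hasDerivAt_inner_of_ojaFlow {d : ℕ} {q : EuclideanSpace ℝ (Fin d)} (hq : ‖q‖ = 1)
    {v : ℝ → EuclideanSpace ℝ (Fin d)} {t : ℝ}
    (hv : HasDerivAt v (ojaRHS (vecMulVec q q) (v t)) t) :
    HasDerivAt (fun s => ⟪q, v s⟫_ℝ) (⟪q, v t⟫_ℝ - ⟪q, v t⟫_ℝ ^ 3) t := by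
  refine ((hasDerivAt_const t q).inner ℝ hv).congr_deriv ?_
  rw [ojaRHS_vecMulVec_self, inner_zero_left, inner_sub_right, real_inner_smul_right,
    real_inner_smul_right, real_inner_self_eq_norm_sq, hq]
  ring

lemma tendsto_of_inner_tendsto_one {E : Type*} [NormedAddCommGroup E] [InnerProductSpace ℝ E]
    {α : Type*} {l : Filter α} {q : E} (hq : ‖q‖ = 1) {v : α → E} (hv : ∀ᶠ s in l, ‖v s‖ = 1)
    (h : Tendsto (fun s => ⟪q, v s⟫_ℝ) l (𝓝 1)) : Tendsto v l (𝓝 q) := by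
  rw [tendsto_iff_norm_sub_tendsto_zero]
  have hsq : Tendsto (fun s => ‖v s - q‖ ^ 2) l (𝓝 0) := by
    refine (tendsto_congr' ?_).mpr (by simpa using (h.const_mul 2).const_sub 2)
    filter_upwards [hv] with s hs
    rw [norm_sub_sq_real, hs, hq, real_inner_comm]
    ring
  simpa using hsq.sqrt

lemma tendsto_of_ojaFlow_rank_one {d : ℕ} {q : EuclideanSpace ℝ (Fin d)} (hq : ‖q‖ = 1)
    {v : ℝ → EuclideanSpace ℝ (Fin d)} (hnorm : ∀ t, 0 ≤ t → ‖v t‖ = 1)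
    (hode : ∀ t, 0 ≤ t → HasDerivAt v (ojaRHS (vecMulVec q q) (v t)) t)
    (h0 : 0 < ⟪q, v 0⟫_ℝ) : Tendsto v atTop (𝓝 q) := by
  have hle : ∀ t, 0 ≤ t → ⟪q, v t⟫_ℝ ^ 2 ≤ 1 := fun t ht =>
    (sq_le_one_iff_abs_le_one _).2 (by simpa [hq, hnorm t ht] using abs_real_inner_le_norm q (v t))
  refine tendsto_of_inner_tendsto_one hq ((eventually_ge_atTop 0).mono hnorm) ?_
  exact tendsto_one_of_sub_cube (fun t ht => hasDerivAt_inner_of_ojaFlow hq (hode t ht)) hle h0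

theorem stmt5_general {d N : ℕ} (q : EuclideanSpace ℝ (Fin d)) (hq : ‖q‖ = 1)
    (H : Matrix (Fin d) (Fin d) ℝ) (hH : H = Matrix.vecMulVec q q)
    (V1 V2 : Finset (Fin N))
    (v : Fin N → ℝ → EuclideanSpace ℝ (Fin d))
    (hnorm : ∀ i : Fin N, ∀ t : ℝ, 0 ≤ t → ‖v i t‖ = 1)
    (hode : ∀ i : Fin N, ∀ t : ℝ, 0 ≤ t → HasDerivAt (v i) (ojaRHS H (v i t)) t)
    (hinit1 : ∀ i ∈ V1, 0 < ⟪q, v i 0⟫_ℝ ∧ ⟪q, v i 0⟫_ℝ ≤ 1)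
    (hinit2 : ∀ j ∈ V2, -1 ≤ ⟪q, v j 0⟫_ℝ ∧ ⟪q, v j 0⟫_ℝ < 0) :
    (∀ i ∈ V1, Tendsto (v i) atTop (nhds q)) ∧
      (∀ j ∈ V2, Tendsto (v j) atTop (nhds (-q))) := by
  subst hH
  refine ⟨fun i hi => tendsto_of_ojaFlow_rank_one hq (hnorm i) (hode i) (hinit1 i hi).1,
    fun j hj => tendsto_of_ojaFlow_rank_one (by rwa [norm_neg]) (hnorm j) ?_ ?_⟩
  · simpa only [WithLp.ofLp_neg, vecMulVec_neg, neg_vecMulVec, neg_neg] using hode j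
  · simpa only [inner_neg_left, neg_pos] using (hinit2 j hj).2

/-- For `H = q qᵀ` with `q` a unit vector, agents whose initial opinion has
positive inner product with `q` converge to `q`, and those with negative inner
product converge to `-q`: the group reaches the dissensus configuration
`{q, -q}`. -/
theorem stmt5 {d N : ℕ} (q : EuclideanSpace ℝ (Fin d)) (hq : ‖q‖ = 1)
    (H : Matrix (Fin d) (Fin d) ℝ) (hH : H = Matrix.vecMulVec q q)
    (V1 V2 : Finset (Fin N)) (hne1 : V1.Nonempty) (hne2 : V2.Nonempty)
    (hdisj : Disjoint V1 V2) (hunion : V1 ∪ V2 = Finset.univ)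
    (v : Fin N → ℝ → EuclideanSpace ℝ (Fin d))
    (hnorm : ∀ i : Fin N, ∀ t : ℝ, 0 ≤ t → ‖v i t‖ = 1)
    (hode : ∀ i : Fin N, ∀ t : ℝ, 0 ≤ t → HasDerivAt (v i) (ojaRHS H (v i t)) t)
    (hinit1 : ∀ i ∈ V1, 0 < ⟪q, v i 0⟫_ℝ ∧ ⟪q, v i 0⟫_ℝ ≤ 1)
    (hinit2 : ∀ j ∈ V2, -1 ≤ ⟪q, v j 0⟫_ℝ ∧ ⟪q, v j 0⟫_ℝ < 0) :
    (∀ i ∈ V1, Tendsto (v i) atTop (nhds q)) ∧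
      (∀ j ∈ V2, Tendsto (v j) atTop (nhds (-q))) :=
  stmt5_general q hq H hH V1 V2 v hnorm hode hinit1 hinit2
end

section
/- Let N ≥ 2 and let v₁, w : [0,∞) → ℝ^d be differentiable with ‖v₁(t)‖ = ‖w(t)‖ = 1 for all t. Consider the N-agent configuration with agent 1 at v₁ and agents 2,…,N all at w, with covariance C(t) = ((N−1)/N)(v₁(t) − w(t))(v₁(t) − w(t))ᵀ, and suppose v̇₁ = (I − v₁v₁ᵀ)Cv₁ and ẇ = (I − wwᵀ)Cw. Then β(t) = 1 − ⟨v₁(t), w(t)⟩ satisfies β̇ = ((2N−2)/N)·β²·(2 − β); consequently, if 0 < β(0) < 2 then β(t) is strictly increasing and β(t) → 2, i.e. ⟨v₁(t), w(t)⟩ → −1 as t → ∞, so the trajectory is driven away from the consensus configuration v₁ = w. In particular, the consensus equilibrium of the PCA opinion dynamics is unstable. -/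
/-! For the rank-one covariance `c (v₁ - w)(v₁ - w)ᵀ`, `c = (N - 1)/N`, both Oja velocities are
explicit, and for unit vectors `d/dt ⟪v₁, w⟫ = -2c (1 - ⟪v₁, w⟫)² (1 + ⟪v₁, w⟫)`, i.e.
`β' = 2c β² (2 - β)`. Cauchy–Schwarz gives `β ≤ 2`, so `β` is nondecreasing. The function `2 - β`
has logarithmic derivative `-2c β² ≥ -8c`, so a Grönwall comparison keeps it positive, whence
`β' > 0`. Finally, were `β` to stay below a level `b < 2`, its speed would be at least
`2c β(0)² (2 - b) > 0`, forcing `β` past `b`; hence `β → 2`. -/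

open Matrix Filter
open scoped InnerProductSpace

open Set Real Topology

theorem ojaRHS_smul_vecMulVec {d : ℕ} (c : ℝ) (u x : EuclideanSpace ℝ (Fin d)) :
    ojaRHS (c • vecMulVec u u) x = (c * ⟪u, x⟫_ℝ) • (u - ⟪x, u⟫_ℝ • x) := by
  have hdot : ∀ a b : EuclideanSpace ℝ (Fin d), (a : Fin d → ℝ) ⬝ᵥ b = ⟪a, b⟫_ℝ := fun a b => by
    simp [EuclideanSpace.inner_eq_star_dotProduct, dotProduct_comm]
  rw [ojaRHS, ← mulVec_mulVec, smul_mulVec, vecMulVec_mulVec, op_smul_eq_smul, smul_smul,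
    mulVec_smul, sub_mulVec, one_mulVec, vecMulVec_mulVec, op_smul_eq_smul, hdot, hdot]
  rfl

theorem inner_ojaRHS_add_inner_ojaRHS {d : ℕ} (c : ℝ) {x y : EuclideanSpace ℝ (Fin d)}
    (hx : ‖x‖ = 1) (hy : ‖y‖ = 1) :
    ⟪ojaRHS (c • vecMulVec (x - y) (x - y)) x, y⟫_ℝ
      + ⟪x, ojaRHS (c • vecMulVec (x - y) (x - y)) y⟫_ℝ
      = -(2 * c * (1 - ⟪x, y⟫_ℝ) ^ 2 * (1 + ⟪x, y⟫_ℝ)) := by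
  have hxx : ⟪x, x⟫_ℝ = 1 := by simp [hx]
  have hyy : ⟪y, y⟫_ℝ = 1 := by simp [hy]
  simp only [ojaRHS_smul_vecMulVec, inner_smul_left, inner_smul_right, inner_sub_left,
    inner_sub_right, real_inner_comm x y, hxx, hyy, RCLike.conj_to_real]
  ring

theorem mul_sub_le_sub_of_hasDerivAt_Ici {f f' : ℝ → ℝ} {C : ℝ}
    (hf : ∀ t, 0 ≤ t → HasDerivAt f (f' t) t) (hC : ∀ t, 0 ≤ t → C ≤ f' t)
    {s t : ℝ} (hs : 0 ≤ s) (hst : s ≤ t) : C * (t - s) ≤ f t - f s :=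
  (convex_Ici 0).mul_sub_le_image_sub_of_le_deriv
    (fun t ht => (hf t ht).continuousAt.continuousWithinAt)
    (fun t ht => (hf t (interior_subset ht)).differentiableAt.differentiableWithinAt)
    (fun t ht => (hf t (interior_subset ht)).deriv ▸ hC t (interior_subset ht))
    s hs t (hs.trans hst) hst

theorem monotoneOn_Ici_of_hasDerivAt_nonneg {f f' : ℝ → ℝ}
    (hf : ∀ t, 0 ≤ t → HasDerivAt f (f' t) t) (hf' : ∀ t, 0 ≤ t → 0 ≤ f' t) :
    MonotoneOn f (Ici 0) := fun s hs t _ hst => by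
  simpa using mul_sub_le_sub_of_hasDerivAt_Ici hf hf' hs hst

theorem pos_of_hasDerivAt_Ici_of_neg_mul_le {g g' : ℝ → ℝ} {L : ℝ}
    (hg : ∀ t, 0 ≤ t → HasDerivAt g (g' t) t) (hL : ∀ t, 0 ≤ t → -(L * g t) ≤ g' t)
    (h0 : 0 < g 0) {t : ℝ} (ht : 0 ≤ t) : 0 < g t := by
  have hmono : MonotoneOn (fun s => g s * exp (L * s)) (Ici 0) := by
    refine monotoneOn_Ici_of_hasDerivAt_nonneg
      (f' := fun s => g' s * exp (L * s) + g s * (exp (L * s) * L))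
      (fun s hs => (hg s hs).mul (by simpa using ((hasDerivAt_id s).const_mul L).exp))
      fun s hs => ?_
    nlinarith [hL s hs, exp_pos (L * s)]
  have := hmono self_mem_Ici ht ht
  simp only [mul_zero, exp_zero, mul_one] at this
  exact pos_of_mul_pos_left (h0.trans_le this) (exp_pos _).le

theorem exists_lt_of_hasDerivAt_ge_of_le {f f' : ℝ → ℝ} {b m : ℝ} (hm : 0 < m)
    (hf : ∀ t, 0 ≤ t → HasDerivAt f (f' t) t) (hf' : ∀ t, 0 ≤ t → f t ≤ b → m ≤ f' t) :
    ∃ t, 0 ≤ t ∧ b < f t := by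
  by_contra! hb
  set T := |b - f 0| / m + 1
  have hT : 0 ≤ T := by positivity
  have hgrowth := mul_sub_le_sub_of_hasDerivAt_Ici hf (fun t ht => hf' t ht (hb t ht)) le_rfl hT
  have hmT : m * T = |b - f 0| + m := by rw [mul_add, mul_div_cancel₀ _ hm.ne', mul_one]
  nlinarith [le_abs_self (b - f 0), hb T hT]

theorem strictMonoOn_and_tendsto_of_hasDerivAt_sq_mul_sub {β : ℝ → ℝ} {K a : ℝ} (hK : 0 < K)
    (hβ : ∀ t, 0 ≤ t → HasDerivAt β (K * β t ^ 2 * (a - β t)) t)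
    (hle : ∀ t, 0 ≤ t → β t ≤ a) (h0 : 0 < β 0) (h0a : β 0 < a) :
    StrictMonoOn β (Ici 0) ∧ Tendsto β atTop (𝓝 a) := by
  have hmono : MonotoneOn β (Ici 0) := monotoneOn_Ici_of_hasDerivAt_nonneg hβ fun t ht =>
    mul_nonneg (by positivity) (sub_nonneg.2 (hle t ht))
  have hge : ∀ t, 0 ≤ t → β 0 ≤ β t := fun t ht => hmono self_mem_Ici ht ht
  have hlt : ∀ t, 0 ≤ t → β t < a := fun t ht => sub_pos.1 <|
    pos_of_hasDerivAt_Ici_of_neg_mul_le (g := fun t => a - β t) (L := K * a ^ 2)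
      (fun t ht => (hβ t ht).const_sub a)
      (fun t ht => by
        have hsq : β t ^ 2 ≤ a ^ 2 := pow_le_pow_left₀ (h0.trans_le (hge t ht)).le (hle t ht) 2
        nlinarith [mul_le_mul_of_nonneg_left hsq hK.le, sub_nonneg.2 (hle t ht)])
      (sub_pos.2 h0a) ht
  refine ⟨strictMonoOn_of_deriv_pos (convex_Ici 0)
    (fun t ht => (hβ t ht).continuousAt.continuousWithinAt) fun t ht => ?_, ?_⟩
  · have ht : 0 ≤ t := interior_subset ht
    rw [(hβ t ht).deriv]
    have := h0.trans_le (hge t ht)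
    have := sub_pos.2 (hlt t ht)
    positivity
  refine tendsto_order.2 ⟨fun b hb => ?_, fun b hb =>
    eventually_atTop.2 ⟨0, fun t ht => (hle t ht).trans_lt hb⟩⟩
  obtain ⟨T, hT, hbT⟩ := exists_lt_of_hasDerivAt_ge_of_le (b := b) (m := K * β 0 ^ 2 * (a - b))
    (by have := sub_pos.2 hb; positivity) hβ fun t ht hbt =>
      mul_le_mul (mul_le_mul_of_nonneg_left (pow_le_pow_left₀ h0.le (hge t ht) 2) hK.le)
        (by linarith) (by linarith) (by positivity)
  exact eventually_atTop.2 ⟨T, fun t ht => hbT.trans_le (hmono hT (hT.trans ht) ht)⟩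

/-- For the `N`-agent configuration with agent 1 at `v₁` and agents `2, …, N`
at `w`, evolving under the PCA dynamics with covariance
`C = ((N-1)/N)(v₁-w)(v₁-w)ᵀ`, the quantity `β = 1 - ⟨v₁, w⟩` satisfies
`β̇ = ((2N-2)/N) β² (2 - β)`; hence if `0 < β(0) < 2`, then `β` is strictly
increasing on `[0, ∞)` and `β → 2`, i.e. `⟨v₁, w⟩ → -1`: the trajectory is
driven away from consensus, so the consensus equilibrium is unstable. -/
theorem stmt9 {d N : ℕ} (hN : 2 ≤ N)
    (v1 w : ℝ → EuclideanSpace ℝ (Fin d))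
    (hn1 : ∀ t : ℝ, 0 ≤ t → ‖v1 t‖ = 1) (hnw : ∀ t : ℝ, 0 ≤ t → ‖w t‖ = 1)
    (C : ℝ → Matrix (Fin d) (Fin d) ℝ)
    (hC : ∀ t : ℝ, C t = (((N : ℝ) - 1) / N) • Matrix.vecMulVec (v1 t - w t) (v1 t - w t))
    (hode1 : ∀ t : ℝ, 0 ≤ t → HasDerivAt v1 (ojaRHS (C t) (v1 t)) t)
    (hode2 : ∀ t : ℝ, 0 ≤ t → HasDerivAt w (ojaRHS (C t) (w t)) t)
    (β : ℝ → ℝ) (hβ : ∀ t : ℝ, β t = 1 - ⟪v1 t, w t⟫_ℝ) :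
    (∀ t : ℝ, 0 ≤ t →
      HasDerivAt β ((2 * (N : ℝ) - 2) / N * (β t) ^ 2 * (2 - β t)) t) ∧
    (0 < β 0 → β 0 < 2 →
      StrictMonoOn β (Set.Ici 0) ∧ Tendsto β atTop (nhds 2) ∧
        Tendsto (fun t => ⟪v1 t, w t⟫_ℝ) atTop (nhds (-1))) := by
  have hN2 : (2 : ℝ) ≤ N := by exact_mod_cast hN
  have hK : 0 < (2 * (N : ℝ) - 2) / N := div_pos (by linarith) (by positivity)
  have hderiv : ∀ t : ℝ, 0 ≤ t →
      HasDerivAt β ((2 * (N : ℝ) - 2) / N * (β t) ^ 2 * (2 - β t)) t := by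
    intro t ht
    have h := ((hode1 t ht).inner ℝ (hode2 t ht)).const_sub 1
    rw [hC, add_comm, inner_ojaRHS_add_inner_ojaRHS _ (hn1 t ht) (hnw t ht)] at h
    rw [show (fun t => 1 - ⟪v1 t, w t⟫_ℝ) = β from (funext hβ).symm] at h
    refine h.congr_deriv ?_
    rw [hβ]
    field_simp
    ring
  have hle : ∀ t : ℝ, 0 ≤ t → β t ≤ 2 := fun t ht => by
    linarith [hβ t, neg_one_le_real_inner_of_norm_eq_one (hn1 t ht) (hnw t ht)]
  refine ⟨hderiv, fun h0 h02 => ?_⟩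
  obtain ⟨hmono, hlim⟩ := strictMonoOn_and_tendsto_of_hasDerivAt_sq_mul_sub hK hderiv hle h0 h02
  refine ⟨hmono, hlim, ?_⟩
  have hinner : (fun t => ⟪v1 t, w t⟫_ℝ) = fun t => 1 - β t := funext fun t => by rw [hβ]; ring
  rw [hinner]
  convert (tendsto_const_nhds (x := (1 : ℝ))).sub hlim using 2
  norm_num
end
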